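/- arXiv:2007.15977 — 4 statements merged into one kernel-verified Lean document; each statement's English description precedes it below -/
import Mathlib

section
/- For t ≥ 1, one has 2π Σ_{k∈ℤ} (-1)^k (k + 1/2) e^{-π t (k+1/2)²} ≥ 2π (1 - 1/175) e^{-π t/4}. -/
/-!
The terms for `k` and `-k - 1` coincide, so the series is twice its part over `k ≥ 0`. The term
`k = 0` contributes `e^{-πt/4}/2`; for `m ≥ 1` and `t ≥ 1` the `m`-th term is at most
`(3/2) e^{-πt/4} q^m` in absolute value, where `q = e^{-2π}`. Hence the error is at most
`3 e^{-πt/4} q / (1 - q) = 3 e^{-πt/4} / (e^{2π} - 1)`, and `e^{2π} > 526` makes this `≤ e^{-πt/4}/175`.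
-/

open Real

noncomputable def theta2DerivTerm (t : ℝ) (k : ℤ) : ℝ :=
  (-1 : ℝ) ^ k * ((k : ℝ) + 1 / 2) * exp (-π * t * ((k : ℝ) + 1 / 2) ^ 2)

theorem HasSum.int_of_neg_add_one_eq {M : Type*} [AddCommMonoid M] [TopologicalSpace M]
    [ContinuousAdd M] {f : ℤ → M} {m : M} (hf : HasSum (fun n : ℕ => f n) m)
    (hsymm : ∀ n : ℕ, f (-(n + 1)) = f n) : HasSum f (m + m) :=
  hf.of_nat_of_neg_add_one (by simpa only [hsymm] using hf)

theorem hasSum_exp_neg_two_pi_pow_succ :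
    HasSum (fun n : ℕ => exp (-(2 * π)) ^ (n + 1)) (exp (-(2 * π)) / (1 - exp (-(2 * π)))) := by
  have hgeom := hasSum_geometric_of_lt_one (exp_pos (-(2 * π))).le
    (exp_lt_one_iff.mpr (by linarith [pi_pos]))
  simpa only [pow_succ', div_eq_mul_inv] using hgeom.mul_left (exp (-(2 * π)))

theorem exp_two_pi_gt : 526 < exp (2 * π) := by
  have h6 : (2.7182818283 : ℝ) ^ 6 < exp 1 ^ 6 := by gcongr; exact exp_one_gt_d9
  have hfrac := quadratic_le_exp_of_nonneg (x := 0.28) (by norm_num)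
  calc (526 : ℝ) < 2.7182818283 ^ 6 * (1 + 0.28 + 0.28 ^ 2 / 2) := by norm_num
    _ ≤ exp 1 ^ 6 * exp 0.28 := by gcongr
    _ = exp 6.28 := by rw [← exp_nat_mul, ← exp_add]; norm_num
    _ < exp (2 * π) := exp_lt_exp.mpr (by linarith [pi_gt_d2])

theorem three_mul_geom_exp_neg_two_pi_le :
    3 * (exp (-(2 * π)) / (1 - exp (-(2 * π)))) ≤ 1 / 175 := by
  have h := exp_two_pi_gt
  have hq : exp (-(2 * π)) / (1 - exp (-(2 * π))) = 1 / (exp (2 * π) - 1) := by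
    rw [exp_neg]; field_simp
  rw [hq, mul_one_div, div_le_div_iff₀ (by linarith) (by norm_num)]
  linarith

theorem add_half_mul_exp_neg_pi_mul_le {x : ℝ} (hx : 1 ≤ x) :
    (x + 1 / 2) * exp (-π * (x * (x + 1))) ≤ 3 / 2 * exp (-(2 * π * x)) := by
  have hexp : exp (-(2 * π * x)) = exp (-π * (x * (x + 1))) * exp (π * (x * (x - 1))) := by
    rw [← exp_add]; ring_nf
  have hpoly : x + 1 / 2 ≤ 3 / 2 * exp (π * (x * (x - 1))) := by
    have hlin := add_one_le_exp (π * (x * (x - 1)))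
    have : 3 ≤ π * x := by nlinarith [pi_gt_three]
    nlinarith
  calc (x + 1 / 2) * exp (-π * (x * (x + 1)))
      ≤ 3 / 2 * exp (π * (x * (x - 1))) * exp (-π * (x * (x + 1))) := by gcongr
    _ = 3 / 2 * exp (-(2 * π * x)) := by rw [hexp]; ring

namespace theta2DerivTerm

variable (t : ℝ)

theorem neg_add_one (k : ℤ) : theta2DerivTerm t (-(k + 1)) = theta2DerivTerm t k := by
  have hsign : (-1 : ℝ) ^ (-(k + 1)) = -(-1) ^ k := by
    rw [zpow_neg, zpow_add_one₀ (by norm_num)]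
    rcases Int.even_or_odd k with hk | hk <;> simp [hk.neg_one_zpow]
  simp only [theta2DerivTerm, hsign]
  push_cast
  ring_nf

theorem zero : theta2DerivTerm t 0 = exp (-π * t / 4) / 2 := by
  simp only [theta2DerivTerm]; norm_num; ring_nf

theorem abs_natCast (n : ℕ) :
    |theta2DerivTerm t n| = (n + 1 / 2) * (exp (-π * t / 4) * exp (-π * t * (n * (n + 1)))) := by
  rw [theta2DerivTerm, zpow_natCast, ← exp_add, abs_mul, abs_mul, abs_pow, abs_neg, abs_one,
    one_pow, one_mul, abs_of_nonneg (by positivity), abs_of_pos (exp_pos _)]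
  push_cast
  ring_nf

variable {t}

theorem abs_natCast_add_one_le (ht : 1 ≤ t) (n : ℕ) :
    |theta2DerivTerm t (n + 1)| ≤ 3 / 2 * exp (-π * t / 4) * exp (-(2 * π)) ^ (n + 1) := by
  have habs := abs_natCast t (n + 1)
  push_cast at habs
  set m : ℝ := n + 1
  have hm : 1 ≤ m := by simp [m]
  have hdecay : exp (-π * t * (m * (m + 1))) ≤ exp (-π * (m * (m + 1))) := by
    gcongr
    nlinarith [pi_pos]
  calc |theta2DerivTerm t (n + 1)|
      ≤ exp (-π * t / 4) * ((m + 1 / 2) * exp (-π * (m * (m + 1)))) := by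
        rw [habs, mul_left_comm]; gcongr
    _ ≤ exp (-π * t / 4) * (3 / 2 * exp (-(2 * π * m))) :=
        mul_le_mul_of_nonneg_left (add_half_mul_exp_neg_pi_mul_le hm) (exp_pos _).le
    _ = 3 / 2 * exp (-π * t / 4) * exp (-(2 * π)) ^ (n + 1) := by
        rw [← exp_nat_mul]; push_cast [m]; ring_nf

theorem summable_natCast_add_one (ht : 1 ≤ t) :
    Summable fun n : ℕ => theta2DerivTerm t (n + 1) :=
  .of_norm_bounded
    (hasSum_exp_neg_two_pi_pow_succ.mul_left (3 / 2 * exp (-π * t / 4))).summable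
    (abs_natCast_add_one_le ht)

theorem neg_le_tsum_natCast_add_one (ht : 1 ≤ t) :
    -(3 / 2 * exp (-π * t / 4) * (exp (-(2 * π)) / (1 - exp (-(2 * π))))) ≤
      ∑' n : ℕ, theta2DerivTerm t (n + 1) := by
  have hgeom := (hasSum_exp_neg_two_pi_pow_succ.mul_left (3 / 2 * exp (-π * t / 4))).neg
  rw [← hgeom.tsum_eq]
  exact hgeom.summable.tsum_le_tsum (fun n => neg_le_of_abs_le (abs_natCast_add_one_le ht n))
    (summable_natCast_add_one ht)

theorem tsum_eq (hs : Summable fun n : ℕ => theta2DerivTerm t (n + 1)) :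
    ∑' k, theta2DerivTerm t k = exp (-π * t / 4) + 2 * ∑' n : ℕ, theta2DerivTerm t (n + 1) := by
  have hnat : HasSum (fun n : ℕ => theta2DerivTerm t n)
      (theta2DerivTerm t 0 + ∑' n : ℕ, theta2DerivTerm t (n + 1)) := by
    rw [← hasSum_nat_add_iff' 1]
    simpa using hs.hasSum
  rw [(hnat.int_of_neg_add_one_eq (neg_add_one t ·)).tsum_eq, zero]
  ring

end theta2DerivTerm

theorem theta2_derivative_lower_bound (t : ℝ) (ht : 1 ≤ t) :
    2 * π * (1 - 1 / 175) * Real.exp (-π * t / 4) ≤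
      2 * π * ∑' k : ℤ, (-1 : ℝ) ^ k * ((k : ℝ) + 1 / 2) * Real.exp (-π * t * ((k : ℝ) + 1 / 2) ^ 2) := by
  change _ ≤ 2 * π * ∑' k, theta2DerivTerm t k
  rw [theta2DerivTerm.tsum_eq (theta2DerivTerm.summable_natCast_add_one ht)]
  have htail := theta2DerivTerm.neg_le_tsum_natCast_add_one ht
  have hratio := mul_le_mul_of_nonneg_left three_mul_geom_exp_neg_two_pi_le (exp_pos (-π * t / 4)).le
  rw [mul_assoc]
  gcongr
  linarith
end

section
/- For t ≥ 1, one has 4π Σ_{k∈ℤ} (k+1/2)² e^{-π t (k+1/2)²} ≤ 2π (1 + 1/55) e^{-π t/4}. -/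
open Real

/-!
Pairing `k` with `-k - 1` and pulling out `exp (-π t / 4)` turns the sum into
`2 exp (-π t / 4) ∑_{n ≥ 0} (2n+1)² exp (-π t (n² + n))`. Since `(2n+1)² ≤ 9ⁿ` and
`t (n² + n) ≥ 2n`, the `n`-th term is at most `rⁿ` with `r = 9 exp (-2π) ≤ 9/512`, and
`1 / (1 - 9/512) = 1 + 9/503 < 1 + 1/55`.
-/

theorem tsum_int_eq_two_nsmul_tsum_nat {M : Type*} [AddCommMonoid M] [TopologicalSpace M]
    [ContinuousAdd M] [T2Space M] {f : ℤ → M} (hf : Summable fun n : ℕ ↦ f n)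
    (hsymm : ∀ n : ℕ, f (-(n + 1)) = f n) :
    ∑' k : ℤ, f k = 2 • ∑' n : ℕ, f n := by
  rw [tsum_of_nat_of_neg_add_one hf (by simpa only [hsymm] using hf), two_nsmul]
  simp only [hsymm]

theorem two_mul_add_one_sq_le_nine_pow (n : ℕ) : (2 * n + 1) ^ 2 ≤ 9 ^ n := by
  induction n with
  | zero => norm_num
  | succ n ih =>
    calc (2 * (n + 1) + 1) ^ 2 ≤ (2 * n + 1) ^ 2 * 9 := by ring_nf; omega
      _ ≤ 9 ^ (n + 1) := by rw [pow_succ]; exact Nat.mul_le_mul_right 9 ih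

theorem exp_neg_two_mul_pi_le : exp (-(2 * π)) ≤ 1 / 512 := by
  have hlog : 9 * log 2 ≤ 2 * π := by nlinarith [log_two_lt_d9, pi_gt_d6]
  calc exp (-(2 * π)) ≤ exp (-(9 * log 2)) := exp_le_exp.mpr (by linarith)
    _ = 1 / 512 := by
      rw [exp_neg, ← log_rpow two_pos, exp_log (by positivity)]
      norm_num

theorem add_half_sq_mul_exp_eq (t x : ℝ) :
    (x + 1 / 2) ^ 2 * exp (-π * t * (x + 1 / 2) ^ 2) =
      exp (-π * t / 4) / 4 * ((2 * x + 1) ^ 2 * exp (-π * t * (x ^ 2 + x))) := by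
  rw [show -π * t * (x + 1 / 2) ^ 2 = -π * t / 4 + -π * t * (x ^ 2 + x) by ring, exp_add]
  ring

theorem odd_sq_mul_exp_le_geometric {t : ℝ} (ht : 1 ≤ t) (n : ℕ) :
    (2 * (n : ℝ) + 1) ^ 2 * exp (-π * t * ((n : ℝ) ^ 2 + n)) ≤ (9 * exp (-(2 * π))) ^ n := by
  rw [mul_pow, ← exp_nat_mul]
  have hsq : (2 * (n : ℝ) + 1) ^ 2 ≤ 9 ^ n := by exact_mod_cast two_mul_add_one_sq_le_nine_pow n
  have hn : (n : ℝ) ≤ n ^ 2 := by exact_mod_cast Nat.le_self_pow two_ne_zero n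
  have hexp : -π * t * ((n : ℝ) ^ 2 + n) ≤ n * -(2 * π) := by
    nlinarith [pi_pos, mul_le_mul_of_nonneg_right ht (by positivity : (0 : ℝ) ≤ (n : ℝ) ^ 2 + n)]
  exact mul_le_mul hsq (exp_le_exp.mpr hexp) (exp_pos _).le (by positivity)

theorem theta2_second_derivative_upper_bound (t : ℝ) (ht : 1 ≤ t) :
    4 * π * (∑' k : ℤ, ((k : ℝ) + 1 / 2) ^ 2 * Real.exp (-π * t * ((k : ℝ) + 1 / 2) ^ 2)) ≤
      2 * π * (1 + 1 / 55) * Real.exp (-π * t / 4) := by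
  set r := 9 * exp (-(2 * π))
  set h : ℕ → ℝ := fun n ↦ (2 * (n : ℝ) + 1) ^ 2 * exp (-π * t * ((n : ℝ) ^ 2 + n))
  have hr : r ≤ 9 / 512 := by linarith [exp_neg_two_mul_pi_le]
  have hr0 : 0 ≤ r := by positivity
  have hr1 : r < 1 := by linarith
  have hgeom := summable_geometric_of_lt_one hr0 hr1
  have hh : Summable h :=
    hgeom.of_nonneg_of_le (fun n ↦ by positivity) (odd_sq_mul_exp_le_geometric ht)
  have hsum_h : ∑' n, h n ≤ 1 + 1 / 55 := calc
    ∑' n, h n ≤ ∑' n, r ^ n := hh.tsum_le_tsum (odd_sq_mul_exp_le_geometric ht) hgeom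
    _ = (1 - r)⁻¹ := tsum_geometric_of_lt_one hr0 hr1
    _ ≤ 1 + 1 / 55 := by rw [inv_le_comm₀ (by linarith) (by norm_num)]; linarith
  have hpair : ∑' k : ℤ, ((k : ℝ) + 1 / 2) ^ 2 * exp (-π * t * ((k : ℝ) + 1 / 2) ^ 2) =
      exp (-π * t / 4) / 2 * ∑' n, h n := by
    rw [tsum_int_eq_two_nsmul_tsum_nat, nsmul_eq_mul]
    · simp only [Int.cast_natCast, add_half_sq_mul_exp_eq, tsum_mul_left, h]
      ring
    · simpa only [Int.cast_natCast, add_half_sq_mul_exp_eq] using hh.mul_left _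
    · intro n; push_cast; ring_nf
  rw [hpair]
  have := mul_le_mul_of_nonneg_left hsum_h (by positivity : 0 ≤ 2 * π * exp (-π * t / 4))
  linarith
end

section
/- For a fixed α > 0 and a lattice parametrized by (x,y) with x = 1/2 and y > 0, the centered lattice theta function θᶜ(α) = Σ_{k,l∈ℤ} e^{-(πα/y)((k+1/2)² + 2x(k+1/2)(l+1/2) + (x²+y²)(l+1/2)²)} factorizes as θᶜ(α) = (1/2) θ₂(α y) θ₂(α/(4y)). -/
/-!
Completing the square, the quadratic form of the lattice with `x = 1/2` is
`(k + 1/2)² + (k + 1/2)(l + 1/2) + (1/4 + y²)(l + 1/2)² = y² (l + 1/2)² + (2k + l + 3/2)² / 4`,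
so each summand splits as `exp (-π α y (l + 1/2)²) · exp (-π (α / 4y) (2k + l + 3/2)²)`.
For fixed `l`, the inner sum runs over the half-integers `j + 1/2` with `j ≡ l + 1 (mod 2)`;
since the Gaussian is even, the reflection `u ↦ -u` exchanges the two parity classes, so the
inner sum is half of `θ₂ (α / 4y)` whatever `l` is, and the double sum factorizes.
-/

open Real

theorem HasSum.int_even_add_odd {M : Type*} [AddCommMonoid M] [TopologicalSpace M]
    [ContinuousAdd M] {f : ℤ → M} {a b : M} (he : HasSum (fun k ↦ f (2 * k)) a)
    (ho : HasSum (fun k ↦ f (2 * k + 1)) b) : HasSum f (a + b) := by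
  have := mul_right_injective₀ (two_ne_zero' ℤ)
  replace ho := ((add_left_injective 1).comp this).hasSum_range_iff.2 ho
  refine (this.hasSum_range_iff.2 he).add_isCompl ?_ ho
  simpa [Function.comp_def] using Int.isCompl_even_odd

theorem HasSum.prod_of_nonneg {β γ : Type*} {f : β × γ → ℝ} (hf : 0 ≤ f) {g : β → ℝ} {a : ℝ}
    (hfib : ∀ b, HasSum (fun c ↦ f (b, c)) (g b)) (hg : HasSum g a) : HasSum f a := by
  have hS : Summable f := (summable_prod_of_nonneg hf).2
    ⟨fun b ↦ (hfib b).summable, by simpa only [fun b ↦ (hfib b).tsum_eq] using hg.summable⟩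
  exact hg.unique (hS.hasSum.prod_fiberwise hfib) ▸ hS.hasSum

theorem tsum_two_mul_add_int_add_half {E : Type*} [AddCommMonoid E] [TopologicalSpace E]
    {f : ℝ → E} (hf : Function.Even f) (m : ℤ) :
    ∑' k : ℤ, f (2 * k + m + 1 / 2) = ∑' k : ℤ, f (2 * k + 1 / 2) := by
  obtain ⟨d, rfl | rfl⟩ := Int.even_or_odd' m
  · rw [← (Equiv.subRight d).tsum_eq]
    refine tsum_congr fun k ↦ congrArg f ?_
    push_cast [Equiv.subRight_apply]
    ring
  · rw [← ((Equiv.neg ℤ).trans (Equiv.subRight (d + 1))).tsum_eq]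
    refine tsum_congr fun k ↦ ?_
    rw [← hf]
    push_cast [Equiv.trans_apply, Equiv.neg_apply, Equiv.subRight_apply]
    ring_nf

theorem tsum_int_add_half_eq_two_nsmul {E : Type*} [AddCommGroup E] [UniformSpace E]
    [IsUniformAddGroup E] [CompleteSpace E] [T2Space E] {f : ℝ → E} (hf : Function.Even f)
    (hs : Summable fun j : ℤ ↦ f (j + 1 / 2)) :
    ∑' j : ℤ, f (j + 1 / 2) = 2 • ∑' k : ℤ, f (2 * k + 1 / 2) := by
  have he := hs.comp_injective (mul_right_injective₀ (two_ne_zero' ℤ))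
  have ho := hs.comp_injective ((add_left_injective 1).comp (mul_right_injective₀ (two_ne_zero' ℤ)))
  rw [(HasSum.int_even_add_odd (f := fun j : ℤ ↦ f (j + 1 / 2)) he.hasSum ho.hasSum).tsum_eq,
    two_nsmul]
  push_cast [Function.comp_def]
  simpa using tsum_two_mul_add_int_add_half hf 1

noncomputable def theta₂ (t : ℝ) : ℝ := ∑' k : ℤ, exp (-π * t * ((k : ℝ) + 1 / 2) ^ 2)

theorem summable_exp_neg_pi_mul_int_add_sq {t : ℝ} (ht : 0 < t) (a : ℝ) :
    Summable fun k : ℤ ↦ exp (-π * t * ((k : ℝ) + a) ^ 2) := by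
  refine (HurwitzKernelBounds.summable_f_int 0 a ht).congr fun k ↦ ?_
  rw [HurwitzKernelBounds.f_int, pow_zero, one_mul]
  ring_nf

theorem hasSum_exp_neg_pi_mul_two_mul_add_int_add_half {t : ℝ} (ht : 0 < t) (m : ℤ) :
    HasSum (fun k : ℤ ↦ exp (-π * t * (2 * k + m + 1 / 2) ^ 2)) (theta₂ t / 2) := by
  have hgauss : Function.Even fun u : ℝ ↦ exp (-π * t * u ^ 2) := fun u ↦ by simp only [neg_sq]
  have hsum := summable_exp_neg_pi_mul_int_add_sq ht (1 / 2)
  have hshift : Summable fun k : ℤ ↦ exp (-π * t * (2 * k + m + 1 / 2) ^ 2) := by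
    simpa [Function.comp_def] using
      hsum.comp_injective ((add_left_injective m).comp (mul_right_injective₀ (two_ne_zero' ℤ)))
  rw [hshift.hasSum_iff, tsum_two_mul_add_int_add_half hgauss m, theta₂,
    tsum_int_add_half_eq_two_nsmul hgauss hsum, two_nsmul, add_self_div_two]

theorem theta_c_factorization (α y : ℝ) (hα : 0 < α) (hy : 0 < y) :
    (∑' p : ℤ × ℤ,
        Real.exp (-(π * α / y) * (((p.1 : ℝ) + 1 / 2) ^ 2 +
          2 * (1 / 2) * ((p.1 : ℝ) + 1 / 2) * ((p.2 : ℝ) + 1 / 2) +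
          ((1 / 2 : ℝ) ^ 2 + y ^ 2) * ((p.2 : ℝ) + 1 / 2) ^ 2))) =
      (1 / 2) * (∑' k : ℤ, Real.exp (-π * (α * y) * ((k : ℝ) + 1 / 2) ^ 2)) *
        ∑' k : ℤ, Real.exp (-π * (α / (4 * y)) * ((k : ℝ) + 1 / 2) ^ 2) := by
  show _ = 1 / 2 * theta₂ (α * y) * theta₂ (α / (4 * y))
  have hsquare (k l : ℝ) :
      -(π * α / y) * ((k + 1 / 2) ^ 2 + 2 * (1 / 2) * (k + 1 / 2) * (l + 1 / 2) +
        ((1 / 2) ^ 2 + y ^ 2) * (l + 1 / 2) ^ 2) =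
      -π * (α * y) * (l + 1 / 2) ^ 2 + -π * (α / (4 * y)) * (2 * k + (l + 1) + 1 / 2) ^ 2 := by
    field_simp
    ring
  have hfiber (l : ℤ) : HasSum (fun k : ℤ ↦ exp (-(π * α / y) * (((k : ℝ) + 1 / 2) ^ 2 +
      2 * (1 / 2) * ((k : ℝ) + 1 / 2) * ((l : ℝ) + 1 / 2) +
      ((1 / 2 : ℝ) ^ 2 + y ^ 2) * ((l : ℝ) + 1 / 2) ^ 2)))
      (exp (-π * (α * y) * ((l : ℝ) + 1 / 2) ^ 2) * (theta₂ (α / (4 * y)) / 2)) := by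
    simpa only [hsquare, exp_add, Int.cast_add, Int.cast_one] using
      (hasSum_exp_neg_pi_mul_two_mul_add_int_add_half (by positivity) (l + 1)).mul_left
        (exp (-π * (α * y) * ((l : ℝ) + 1 / 2) ^ 2))
  rw [← (Equiv.prodComm ℤ ℤ).tsum_eq, show 1 / 2 * theta₂ (α * y) * theta₂ (α / (4 * y)) =
    theta₂ (α * y) * (theta₂ (α / (4 * y)) / 2) by ring]
  refine HasSum.tsum_eq <| .prod_of_nonneg (fun _ ↦ (exp_pos _).le) hfiber ?_
  exact (summable_exp_neg_pi_mul_int_add_sq (by positivity) (1 / 2)).hasSum.mul_right _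
end

section
/- For fixed t > 0, the function y ↦ θ₂(t y) θ₂(t/y) on (0,∞) attains its maximum exactly at y = 1; in particular θ₂(t y) θ₂(t/y) ≤ θ₂(t)² for all y > 0, with equality iff y = 1. -/
/-!
Write `F(u) = log θ₂(eᵘ)`. Since `θ₂(ty) θ₂(t/y) = exp (F(log t + log y) + F(log t - log y))`,
it suffices that `F` is strictly concave, i.e. that the elasticity `x θ₂'(x) / θ₂(x)` strictly
decreases on `(0, ∞)`.

For `x ≥ 1` its derivative has the sign of `x (θ₂'' θ₂ - θ₂'²) + θ₂' θ₂`. The bracket is the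
variance of the frequencies `π (k + 1/2)²` under the weights of `θ₂`; it is at most their second
moment about the smallest frequency `π/4`, which is exponentially small compared with `-θ₂'`.

For `x ≤ 1` the Jacobi identity `θ₂(x) = x^(-1/2) θ₄(1/x)` turns the elasticity of `θ₂` at `x`
into `-1/2` minus the elasticity of `θ₄` at `1/x ≥ 1`, and `(s θ₄'(s))' < 0` there because the
first term of the alternating series of `θ₄` dominates all the others.
-/

open Real Set

noncomputable section

namespace ThetaTwo

lemma sq_le_exp {x : ℝ} (hx : 0 ≤ x) : x ^ 2 ≤ exp x := by
  have h : x ≤ exp (x / 4) ^ 2 := by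
    nlinarith [add_one_le_exp (x / 4), sq_nonneg (x / 4 - 1)]
  calc x ^ 2 ≤ (exp (x / 4) ^ 2) ^ 2 := pow_le_pow_left₀ hx h 2
    _ = exp x := by rw [← pow_mul, ← exp_nat_mul]; ring_nf

lemma mul_sq_mul_exp_neg_le {u d : ℝ} (hd : 0 ≤ d) :
    u * d ^ 2 * exp (-(u * d)) ≤ exp (-((u - 1) * (d - 1))) := by
  have hu : u ≤ exp (u - 1) := by linarith [add_one_le_exp (u - 1)]
  calc u * d ^ 2 * exp (-(u * d)) ≤ exp (u - 1) * exp d * exp (-(u * d)) := by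
        gcongr
        exact sq_le_exp hd
    _ = exp (-((u - 1) * (d - 1))) := by rw [← exp_add, ← exp_add]; ring_nf

lemma exp_neg_two_lt : exp (-2) < 1 / 5 := by
  have h : 5 < exp 2 := by
    have := exp_one_gt_d9
    rw [show (2 : ℝ) = 1 + 1 by norm_num, exp_add]
    nlinarith
  rw [exp_neg, inv_lt_comm₀ (exp_pos _) (by norm_num)]
  linarith

lemma tsum_le_of_succ_le_geometric {f : ℕ → ℝ} (hf : Summable f) {C r : ℝ} (hr₀ : 0 ≤ r)
    (hr₁ : r < 1) (h : ∀ n, f (n + 1) ≤ C * r ^ n) : ∑' n, f n ≤ f 0 + C / (1 - r) := by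
  rw [hf.tsum_eq_zero_add]
  gcongr
  calc ∑' n, f (n + 1) ≤ ∑' n, C * r ^ n :=
        ((summable_nat_add_iff 1).2 hf).tsum_le_tsum h
          ((summable_geometric_of_lt_one hr₀ hr₁).mul_left C)
    _ = C / (1 - r) := by rw [tsum_mul_left, tsum_geometric_of_lt_one hr₀ hr₁, div_eq_mul_inv]

lemma strictAntiOn_mul_deriv_div {f f' f'' : ℝ → ℝ} {s : Set ℝ} (hs : Convex ℝ s)
    (hf : ∀ x ∈ s, HasDerivAt f (f' x) x) (hf' : ∀ x ∈ s, HasDerivAt f' (f'' x) x)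
    (hf₀ : ∀ x ∈ s, f x ≠ 0)
    (hneg : ∀ x ∈ interior s, (f' x + x * f'' x) * f x < x * f' x ^ 2) :
    StrictAntiOn (fun x => x * f' x / f x) s := by
  have hd (x : ℝ) (hx : x ∈ s) : HasDerivAt (fun x => x * f' x / f x)
      (((1 * f' x + x * f'' x) * f x - x * f' x * f' x) / f x ^ 2) x :=
    ((hasDerivAt_id' x).mul (hf' x hx)).div (hf x hx) (hf₀ x hx)
  refine strictAntiOn_of_deriv_neg hs (fun x hx => (hd x hx).continuousAt.continuousWithinAt)
    fun x hx => ?_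
  rw [(hd x (interior_subset hx)).deriv]
  have := hneg x hx
  exact div_neg_of_neg_of_pos (by linarith) (pow_two_pos_of_ne_zero (hf₀ x (interior_subset hx)))

lemma hasDerivAt_log_comp_exp {f f' : ℝ → ℝ} {u : ℝ} (hf : HasDerivAt f (f' (exp u)) (exp u))
    (hf₀ : f (exp u) ≠ 0) :
    HasDerivAt (fun v => log (f (exp v))) (exp u * f' (exp u) / f (exp u)) u :=
  ((hf.comp u (hasDerivAt_exp u)).log hf₀).congr_deriv (by rw [Function.comp_apply]; ring)

lemma mul_lt_sq_of_strictConcaveOn_log_comp_exp {f : ℝ → ℝ} (hf : ∀ x, 0 < x → 0 < f x)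
    (hconc : StrictConcaveOn ℝ univ fun u => log (f (exp u))) {t y : ℝ} (ht : 0 < t)
    (hy : 0 < y) (hy₁ : y ≠ 1) : f (t * y) * f (t / y) < f t ^ 2 := by
  have hlog : log y ≠ 0 := log_ne_zero_of_pos_of_ne_one hy hy₁
  have h := hconc.2 (mem_univ (log t + log y)) (mem_univ (log t - log y))
    (by intro h; apply hlog; linarith) (by norm_num : (0 : ℝ) < 1 / 2)
    (by norm_num : (0 : ℝ) < 1 / 2) (by norm_num)
  simp only [smul_eq_mul] at h
  rw [show 1 / 2 * (log t + log y) + 1 / 2 * (log t - log y) = log t by ring, exp_add, exp_sub,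
    exp_log ht, exp_log hy] at h
  have hty := hf _ (mul_pos ht hy)
  have htdy := hf _ (div_pos ht hy)
  rw [← log_lt_log_iff (mul_pos hty htdy) (pow_pos (hf t ht) 2), log_mul hty.ne' htdy.ne',
    log_pow]
  push_cast
  linarith

section ExpSum

variable {ι : Type*}

def expSum (a lam : ι → ℝ) (m : ℕ) (x : ℝ) : ℝ := ∑' i, a i * lam i ^ m * exp (-(lam i * x))

def ExpSummable (a lam : ι → ℝ) : Prop :=
  ∀ m : ℕ, ∀ x, 0 < x → Summable fun i => ‖a i * lam i ^ m * exp (-(lam i * x))‖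

variable {a lam : ι → ℝ}

lemma ExpSummable.hasSum (ha : ExpSummable a lam) (m : ℕ) {x : ℝ} (hx : 0 < x) :
    HasSum (fun i => a i * lam i ^ m * exp (-(lam i * x))) (expSum a lam m x) :=
  (ha m x hx).of_norm.hasSum

lemma ExpSummable.hasSum_quadratic (ha : ExpSummable a lam) {x : ℝ} (hx : 0 < x) (α β γ : ℝ) :
    HasSum (fun i => a i * (α * lam i ^ 2 + β * lam i + γ) * exp (-(lam i * x)))
      (α * expSum a lam 2 x + β * expSum a lam 1 x + γ * expSum a lam 0 x) := by
  refine ((((ha.hasSum 2 hx).mul_left α).add ((ha.hasSum 1 hx).mul_left β)).add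
    ((ha.hasSum 0 hx).mul_left γ)).congr_fun fun i => ?_
  ring

lemma hasDerivAt_expSum (hlam : ∀ i, 0 ≤ lam i) (ha : ExpSummable a lam) (m : ℕ) {x : ℝ}
    (hx : 0 < x) : HasDerivAt (expSum a lam m) (-expSum a lam (m + 1) x) x := by
  have hterm (i : ι) (y : ℝ) : HasDerivAt (fun y => a i * lam i ^ m * exp (-(lam i * y)))
      (-(a i * lam i ^ (m + 1) * exp (-(lam i * y)))) y := by
    have hlin : HasDerivAt (fun y => -(lam i * y)) (-lam i) y := by
      simpa using ((hasDerivAt_id' y).const_mul (lam i)).fun_neg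
    exact (hlin.exp.const_mul (a i * lam i ^ m)).congr_deriv (by ring)
  have hbound (i : ι) (y : ℝ) (hy : y ∈ Ioi (x / 2)) :
      ‖-(a i * lam i ^ (m + 1) * exp (-(lam i * y)))‖ ≤
        ‖a i * lam i ^ (m + 1) * exp (-(lam i * (x / 2)))‖ := by
    rw [norm_neg, norm_mul, norm_mul (_ * _), norm_of_nonneg (exp_pos _).le,
      norm_of_nonneg (exp_pos _).le]
    gcongr
    exacts [hlam i, hy.le]
  have hx2 : x ∈ Ioi (x / 2) := mem_Ioi.2 (by linarith)
  have := hasDerivAt_tsum_of_isPreconnected (ha (m + 1) (x / 2) (by positivity)) isOpen_Ioi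
    (convex_Ioi _).isPreconnected (fun i y _ => hterm i y) hbound hx2 (ha m x hx).of_norm hx2
  rw [tsum_neg] at this
  exact this

end ExpSum

def gaussFreq (b : ℝ) (n : ℕ) : ℝ := π * (n + b) ^ 2

lemma gaussFreq_nonneg (b : ℝ) (n : ℕ) : 0 ≤ gaussFreq b n := by
  unfold gaussFreq
  positivity

lemma expSummable_gaussFreq {a : ℕ → ℝ} {C : ℝ} (ha : ∀ n, |a n| ≤ C) (b : ℝ) :
    ExpSummable a (gaussFreq b) := by
  intro m x hx
  refine Summable.of_nonneg_of_le (fun _ => norm_nonneg _) (fun n => ?_)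
    ((HurwitzKernelBounds.summable_f_nat (2 * m) b hx).mul_left (C * π ^ m))
  rw [norm_mul, norm_mul, norm_eq_abs, norm_of_nonneg (pow_nonneg (gaussFreq_nonneg b n) m),
    norm_of_nonneg (exp_pos _).le]
  simp only [HurwitzKernelBounds.f_nat, gaussFreq]
  calc |a n| * (π * (n + b) ^ 2) ^ m * exp (-(π * (n + b) ^ 2 * x))
      = |a n| * (π ^ m * ((n + b) ^ (2 * m) * exp (-π * (n + b) ^ 2 * x))) := by
        rw [pow_mul, mul_pow]; ring_nf
    _ ≤ C * (π ^ m * ((n + b) ^ (2 * m) * exp (-π * (n + b) ^ 2 * x))) := by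
        gcongr
        exacts [by rw [pow_mul]; positivity, ha n]
    _ = _ := by ring

-- `Θ₂ m x = (-1)ᵐ θ₂⁽ᵐ⁾(x)`, the `ℤ`-series of `θ₂` being folded onto `ℕ` by `k ↦ -1 - k`;
-- likewise `θ₄(s) = 1 + Θ₄ 0 s = ∑ₖ (-1)ᵏ exp (-π k² s)` and `Θ₄ m s = (-1)ᵐ θ₄⁽ᵐ⁾(s)` for `m ≥ 1`.
local notation "Θ₂" => expSum (fun _ : ℕ => (2 : ℝ)) (gaussFreq (1 / 2))
local notation "Θ₄" => expSum (fun n : ℕ => 2 * (-1 : ℝ) ^ (n + 1)) (gaussFreq 1)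

def theta4 (s : ℝ) : ℝ := 1 + Θ₄ 0 s

lemma expSummable_theta2 : ExpSummable (fun _ : ℕ => (2 : ℝ)) (gaussFreq (1 / 2)) :=
  expSummable_gaussFreq (C := 2) (fun _ => by norm_num) _

lemma expSummable_theta4 : ExpSummable (fun n : ℕ => 2 * (-1 : ℝ) ^ (n + 1)) (gaussFreq 1) :=
  expSummable_gaussFreq (C := 2) (fun n => by simp) _

lemma theta2_pos {x : ℝ} (hx : 0 < x) : 0 < Θ₂ 0 x :=
  (expSummable_theta2.hasSum 0 hx).summable.tsum_pos (fun _ => by positivity) 0 (by positivity)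

lemma theta2_eq_evenKernel {x : ℝ} (hx : 0 < x) :
    Θ₂ 0 x = HurwitzZeta.evenKernel (1 / 2 : ℝ) x := by
  refine (expSummable_theta2.hasSum 0 hx).unique
    ((HurwitzZeta.hasSum_int_evenKernel (1 / 2) hx).nat_add_neg_add_one.congr_fun fun n => ?_)
  push_cast
  simp only [gaussFreq]
  ring_nf

lemma tsum_int_eq_theta2 {x : ℝ} (hx : 0 < x) :
    ∑' k : ℤ, exp (-π * x * ((k : ℝ) + 1 / 2) ^ 2) = Θ₂ 0 x := by
  rw [theta2_eq_evenKernel hx, ← (HurwitzZeta.hasSum_int_evenKernel (1 / 2) hx).tsum_eq]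
  congr 1
  ext k
  ring_nf

lemma theta4_eq_cosKernel {s : ℝ} (hs : 0 < s) :
    theta4 s = HurwitzZeta.cosKernel (1 / 2 : ℝ) s := by
  have h := (expSummable_theta4.hasSum 0 hs).unique
    ((HurwitzZeta.hasSum_nat_cosKernel₀ (1 / 2) hs).congr_fun fun n => ?_)
  · rw [theta4, h]
    ring
  rw [show 2 * π * (1 / 2) * ((n : ℝ) + 1) = ((n + 1 : ℕ) : ℝ) * π by push_cast; ring,
    cos_nat_mul_pi, gaussFreq]
  ring_nf

lemma theta2_eq_theta4_inv {x : ℝ} (hx : 0 < x) : Θ₂ 0 x = theta4 x⁻¹ / √x := by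
  rw [theta2_eq_evenKernel hx, HurwitzZeta.evenKernel_functional_equation,
    theta4_eq_cosKernel (inv_pos.2 hx), sqrt_eq_rpow, one_div x]
  ring

lemma theta4_pos {s : ℝ} (hs : 0 < s) : 0 < theta4 s := by
  have h := theta2_pos (inv_pos.2 hs)
  rw [theta2_eq_theta4_inv (inv_pos.2 hs), inv_inv] at h
  exact (div_pos_iff_of_pos_right (sqrt_pos.2 (inv_pos.2 hs))).1 h

lemma log_theta2_exp (u : ℝ) : log (Θ₂ 0 (exp u)) = log (theta4 (exp (-u))) - u / 2 := by
  rw [theta2_eq_theta4_inv (exp_pos u), ← exp_neg, log_div (theta4_pos (exp_pos _)).ne'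
    (sqrt_pos.2 (exp_pos u)).ne', log_sqrt (exp_pos u).le, log_exp]

lemma theta2_moment_term_le {x : ℝ} (hx : 1 ≤ x) (n : ℕ) :
    x * (2 * (gaussFreq (1 / 2) (n + 1) - π / 4) ^ 2 * exp (-(gaussFreq (1 / 2) (n + 1) * x))) ≤
      2 * π * exp (-(π * x) / 4) * exp (-2) * exp (-2) ^ n := by
  set u := π * x
  set d : ℝ := (n + 1) * (n + 2)
  have hu : 3 ≤ u := by nlinarith [pi_gt_three]
  have hd : gaussFreq (1 / 2) (n + 1) = π / 4 + π * d := by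
    simp only [gaussFreq, d]; push_cast; ring
  calc x * (2 * (gaussFreq (1 / 2) (n + 1) - π / 4) ^ 2 * exp (-(gaussFreq (1 / 2) (n + 1) * x)))
      = 2 * π * exp (-u / 4) * (u * d ^ 2 * exp (-(u * d))) := by
        rw [hd, show -((π / 4 + π * d) * x) = -u / 4 + -(u * d) by ring, exp_add]
        ring
    _ ≤ 2 * π * exp (-u / 4) * exp (-((u - 1) * (d - 1))) := by
        gcongr
        exact mul_sq_mul_exp_neg_le (by positivity)
    _ ≤ 2 * π * exp (-u / 4) * exp (-2 + n * -2) := by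
        gcongr
        nlinarith [sq_nonneg (n : ℝ), (n.cast_nonneg : (0 : ℝ) ≤ n)]
    _ = 2 * π * exp (-u / 4) * exp (-2) * exp (-2) ^ n := by
        rw [exp_add, exp_nat_mul]; ring

lemma theta2_moment_lt {x : ℝ} (hx : 1 ≤ x) :
    x * (Θ₂ 2 x - 2 * (π / 4) * Θ₂ 1 x + (π / 4) ^ 2 * Θ₂ 0 x) < Θ₂ 1 x := by
  have hx₀ : 0 < x := by linarith
  have hsum : HasSum (fun n => x * (2 * (gaussFreq (1 / 2) n - π / 4) ^ 2 *
      exp (-(gaussFreq (1 / 2) n * x))))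
      (x * (Θ₂ 2 x - 2 * (π / 4) * Θ₂ 1 x + (π / 4) ^ 2 * Θ₂ 0 x)) := by
    rw [show Θ₂ 2 x - 2 * (π / 4) * Θ₂ 1 x = 1 * Θ₂ 2 x + -2 * (π / 4) * Θ₂ 1 x by ring]
    exact ((expSummable_theta2.hasSum_quadratic hx₀ 1 (-2 * (π / 4)) ((π / 4) ^ 2)).mul_left
      x).congr_fun fun n => by ring
  have hfreq₀ : gaussFreq (1 / 2) 0 = π / 4 := by simp [gaussFreq]; ring
  have hupper := tsum_le_of_succ_le_geometric hsum.summable (exp_pos _).le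
    (exp_lt_one_iff.2 (by norm_num)) (theta2_moment_term_le hx)
  have hlower : 2 * gaussFreq (1 / 2) 0 ^ 1 * exp (-(gaussFreq (1 / 2) 0 * x)) ≤ Θ₂ 1 x :=
    (expSummable_theta2.hasSum 1 hx₀).summable.le_tsum 0
      fun n _ => by have := gaussFreq_nonneg (1 / 2) n; positivity
  rw [hsum.tsum_eq, hfreq₀, sub_self] at hupper
  rw [hfreq₀] at hlower
  have he := exp_neg_two_lt
  have hE : 0 < exp (-(π * x) / 4) := exp_pos _
  calc _ ≤ 2 * π * exp (-(π * x) / 4) * exp (-2) / (1 - exp (-2)) := by simpa using hupper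
    _ < π / 2 * exp (-(π * x) / 4) := by
        rw [div_lt_iff₀ (by linarith)]
        nlinarith [mul_pos pi_pos hE]
    _ = _ := by rw [show -(π * x) / 4 = -(π / 4 * x) by ring]; ring
    _ ≤ Θ₂ 1 x := hlower

lemma theta4_deriv_term_le {s : ℝ} (hs : 1 ≤ s) (n : ℕ) :
    2 * (-1 : ℝ) ^ (n + 1 + 1) * (gaussFreq 1 (n + 1) * (s * gaussFreq 1 (n + 1) - 1)) *
        exp (-(gaussFreq 1 (n + 1) * s)) ≤
      2 * π * exp (3 - 3 * (π * s)) * exp (-2) ^ n := by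
  set v := π * s
  set m : ℝ := (n + 2) ^ 2
  have hv : 3 ≤ v := by nlinarith [pi_gt_three]
  have hfreq : gaussFreq 1 (n + 1) = π * m := by
    simp only [gaussFreq, m]; push_cast; ring
  rw [hfreq]
  have hterm : 0 ≤ π * m * (s * (π * m) - 1) * exp (-(π * m * s)) := by
    have hm : 4 ≤ m := by simp only [m]; nlinarith [(n.cast_nonneg : (0 : ℝ) ≤ n)]
    have : 1 ≤ s * (π * m) := by rw [show s * (π * m) = v * m by ring]; nlinarith
    exact mul_nonneg (mul_nonneg (by positivity) (by linarith)) (exp_pos _).le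
  calc 2 * (-1 : ℝ) ^ (n + 1 + 1) * (π * m * (s * (π * m) - 1)) * exp (-(π * m * s))
      = 2 * ((-1 : ℝ) ^ (n + 1 + 1) * (π * m * (s * (π * m) - 1) * exp (-(π * m * s)))) := by
        ring
    _ ≤ 2 * (π * m * (s * (π * m) - 1) * exp (-(π * m * s))) :=
        mul_le_mul_of_nonneg_left
          (mul_le_of_le_one_left hterm ((le_abs_self _).trans (abs_neg_one_pow _).le)) two_pos.le
    _ ≤ 2 * (π * m * (s * (π * m)) * exp (-(π * m * s))) := by
        gcongr
        linarith
    _ = 2 * π * (v * m ^ 2 * exp (-(v * m))) := by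
        rw [show π * m * s = v * m by ring]; ring
    _ ≤ 2 * π * exp (-((v - 1) * (m - 1))) := by
        gcongr
        exact mul_sq_mul_exp_neg_le (by positivity)
    _ ≤ 2 * π * exp (3 - 3 * v + n * -2) := by
        gcongr
        simp only [m]
        nlinarith [mul_nonneg (by linarith : (0 : ℝ) ≤ v - 3)
          (by positivity : (0 : ℝ) ≤ (n : ℝ) ^ 2 + 4 * n)]
    _ = 2 * π * exp (3 - 3 * v) * exp (-2) ^ n := by
        rw [exp_add, exp_nat_mul]; ring

lemma theta4_deriv_lt {s : ℝ} (hs : 1 ≤ s) : -Θ₄ 1 s + s * Θ₄ 2 s < 0 := by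
  have hs₀ : 0 < s := by linarith
  have hsum : HasSum (fun n => 2 * (-1 : ℝ) ^ (n + 1) *
      (gaussFreq 1 n * (s * gaussFreq 1 n - 1)) * exp (-(gaussFreq 1 n * s)))
      (-Θ₄ 1 s + s * Θ₄ 2 s) := by
    rw [show -Θ₄ 1 s + s * Θ₄ 2 s = s * Θ₄ 2 s + -1 * Θ₄ 1 s + 0 * Θ₄ 0 s by ring]
    exact (expSummable_theta4.hasSum_quadratic hs₀ s (-1) 0).congr_fun fun n => by ring
  have hupper := tsum_le_of_succ_le_geometric hsum.summable (exp_pos _).le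
    (exp_lt_one_iff.2 (by norm_num)) (theta4_deriv_term_le hs)
  have hfreq₀ : gaussFreq 1 0 = π := by simp [gaussFreq]
  rw [hsum.tsum_eq, hfreq₀] at hupper
  have hv : 3 ≤ π * s := by nlinarith [pi_gt_three]
  have he := exp_neg_two_lt
  have hE : exp (3 - 3 * (π * s)) ≤ exp (-(π * s)) := exp_le_exp.2 (by linarith)
  have hE₀ := exp_pos (-(π * s))
  have hmain : 2 * π * exp (3 - 3 * (π * s)) / (1 - exp (-2)) <
      2 * π * ((s * π - 1) * exp (-(π * s))) := by
    rw [div_lt_iff₀ (by linarith)]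
    have h1 : 1 < (s * π - 1) * (1 - exp (-2)) := by nlinarith
    have := pi_pos
    nlinarith [mul_lt_mul_of_pos_left h1 (mul_pos pi_pos hE₀)]
  calc -Θ₄ 1 s + s * Θ₄ 2 s
      ≤ 2 * (-1) ^ (0 + 1) * (π * (s * π - 1)) * exp (-(π * s)) +
        2 * π * exp (3 - 3 * (π * s)) / (1 - exp (-2)) := hupper
    _ < 0 := by linarith

lemma strictAntiOn_theta2_elasticity : StrictAntiOn (fun x => x * -Θ₂ 1 x / Θ₂ 0 x) (Ici 1) := by
  refine strictAntiOn_mul_deriv_div (f'' := Θ₂ 2) (convex_Ici 1)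
    (fun x hx => hasDerivAt_expSum (gaussFreq_nonneg _) expSummable_theta2 0
      (zero_lt_one.trans_le hx))
    (fun x hx => ?_) (fun x hx => (theta2_pos (zero_lt_one.trans_le hx)).ne') fun x hx => ?_
  · exact (hasDerivAt_expSum (gaussFreq_nonneg _) expSummable_theta2 1
      (zero_lt_one.trans_le hx)).fun_neg.congr_deriv (neg_neg _)
  · rw [interior_Ici, mem_Ioi] at hx
    -- `Θ₂ 0 · (moment about π/4) = (Θ₂ 2 Θ₂ 0 - Θ₂ 1 ²) + (Θ₂ 1 - π/4 · Θ₂ 0)²`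
    have hmoment := theta2_moment_lt hx.le
    have hpos := theta2_pos (by linarith : (0 : ℝ) < x)
    nlinarith [mul_lt_mul_of_pos_right hmoment hpos,
      mul_nonneg (by linarith : (0 : ℝ) ≤ x) (sq_nonneg (Θ₂ 1 x - π / 4 * Θ₂ 0 x))]

lemma strictAntiOn_theta4_elasticity : StrictAntiOn (fun s => s * -Θ₄ 1 s / theta4 s) (Ici 1) := by
  refine strictAntiOn_mul_deriv_div (f'' := Θ₄ 2) (convex_Ici 1)
    (fun s hs => (hasDerivAt_expSum (gaussFreq_nonneg _) expSummable_theta4 0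
      (zero_lt_one.trans_le hs)).const_add 1)
    (fun s hs => ?_) (fun s hs => (theta4_pos (zero_lt_one.trans_le hs)).ne') fun s hs => ?_
  · exact (hasDerivAt_expSum (gaussFreq_nonneg _) expSummable_theta4 1
      (zero_lt_one.trans_le hs)).fun_neg.congr_deriv (neg_neg _)
  · rw [interior_Ici, mem_Ioi] at hs
    have := theta4_deriv_lt hs.le
    have := theta4_pos (by linarith : (0 : ℝ) < s)
    nlinarith [sq_nonneg (Θ₄ 1 s)]

lemma strictConcaveOn_log_theta2_exp : StrictConcaveOn ℝ univ fun u => log (Θ₂ 0 (exp u)) := by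
  set L := fun x => x * -Θ₂ 1 x / Θ₂ 0 x
  set M := fun s => s * -Θ₄ 1 s / theta4 s
  have hL (u : ℝ) : HasDerivAt (fun u => log (Θ₂ 0 (exp u))) (L (exp u)) u :=
    hasDerivAt_log_comp_exp (f' := fun x => -Θ₂ 1 x)
      (hasDerivAt_expSum (gaussFreq_nonneg _) expSummable_theta2 0 (exp_pos u))
      (theta2_pos (exp_pos u)).ne'
  -- the Jacobi identity `F(u) = log θ₄(e⁻ᵘ) - u/2` computes the same derivative through `θ₄`
  have hM (u : ℝ) : HasDerivAt (fun u => log (Θ₂ 0 (exp u))) (-M (exp (-u)) - 1 / 2) u := by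
    rw [show (fun u => log (Θ₂ 0 (exp u))) = fun u => log (theta4 (exp (-u))) - u / 2 from
      funext log_theta2_exp]
    have hG := hasDerivAt_log_comp_exp (f' := fun s => -Θ₄ 1 s)
      ((hasDerivAt_expSum (gaussFreq_nonneg _) expSummable_theta4 0 (exp_pos (-u))).const_add 1)
      (theta4_pos (exp_pos (-u))).ne'
    refine ((hG.comp u (hasDerivAt_neg u)).fun_sub
      ((hasDerivAt_id u).div_const 2)).congr_deriv ?_
    simp only [M, theta4]
    ring
  have hLM (u : ℝ) : L (exp u) = -M (exp (-u)) - 1 / 2 := (hL u).unique (hM u)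
  have hanti : StrictAnti fun u => L (exp u) := by
    refine StrictAntiOn.Iic_union_Ici (a := 0) (fun u hu v hv huv => ?_) fun u hu v hv huv => ?_
    · simp only [hLM]
      have := strictAntiOn_theta4_elasticity (one_le_exp (neg_nonneg.2 hv))
        (one_le_exp (neg_nonneg.2 hu)) (exp_lt_exp.2 (neg_lt_neg huv))
      linarith
    · exact strictAntiOn_theta2_elasticity (one_le_exp hu) (one_le_exp hv) (exp_lt_exp.2 huv)
  refine StrictAnti.strictConcaveOn_univ_of_deriv
    (continuous_iff_continuousAt.2 fun u => (hL u).continuousAt) ?_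
  rwa [show deriv (fun u => log (Θ₂ 0 (exp u))) = fun u => L (exp u) from
    funext fun u => (hL u).deriv]

end ThetaTwo

open ThetaTwo in
theorem faulhuber_steinerberger_theta2 (t : ℝ) (ht : 0 < t) :
    ∀ y : ℝ, 0 < y →
      ((∑' k : ℤ, Real.exp (-π * (t * y) * ((k : ℝ) + 1 / 2) ^ 2)) *
          (∑' k : ℤ, Real.exp (-π * (t / y) * ((k : ℝ) + 1 / 2) ^ 2)) ≤
        (∑' k : ℤ, Real.exp (-π * t * ((k : ℝ) + 1 / 2) ^ 2)) ^ 2) ∧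
      (((∑' k : ℤ, Real.exp (-π * (t * y) * ((k : ℝ) + 1 / 2) ^ 2)) *
          (∑' k : ℤ, Real.exp (-π * (t / y) * ((k : ℝ) + 1 / 2) ^ 2)) =
        (∑' k : ℤ, Real.exp (-π * t * ((k : ℝ) + 1 / 2) ^ 2)) ^ 2) ↔ y = 1) := by
  intro y hy
  rw [tsum_int_eq_theta2 (mul_pos ht hy), tsum_int_eq_theta2 (div_pos ht hy),
    tsum_int_eq_theta2 ht]
  rcases eq_or_ne y 1 with rfl | hy₁
  · simp [sq]
  · have h := mul_lt_sq_of_strictConcaveOn_log_comp_exp (fun x hx => theta2_pos hx)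
      strictConcaveOn_log_theta2_exp ht hy hy₁
    exact ⟨h.le, iff_of_false h.ne hy₁⟩
end
end
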